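/- Let p > 0, N ≥ 2, χ > 0, equal weights wᵢ = 1/N, and let Ẽ_N^p be the unconfined p-approximated discrete Keller–Segel energy on the open set U = {x ∈ ℝ^N : x₁ < ⋯ < x_N}. Suppose x : [0,T) → U (with T ∈ (0,∞]) has differentiable coordinates and satisfies, for every t ∈ [0,T) and every i, (1/N) xᵢ'(t) = −(∂Ẽ_N^p/∂xᵢ)(x(t)). Then the second moment M₂(t) = (1/N) Σᵢ₌₁^N xᵢ(t)² is differentiable on [0,T) with constant derivative M₂'(t) = 2(1 − 1/N)(χ₂(N) − χ), where χ₂(N) = 1 + 1/(N−1). -/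

import Mathlib

/-!
Both parts of the energy are logarithmically homogeneous: each `rᵢᵖ` scales linearly under a
dilation `x ↦ λ x`, so `Ẽ(λ x) = Ẽ(x) + (χ (N - 1) / N - 1) log λ`. Differentiating at `λ = 1`
(Euler's identity) gives `DẼ(x) x = χ (N - 1) / N - 1`, while along the flow
`M₂' = (2 / N) Σᵢ xᵢ xᵢ' = -2 DẼ(x) x`, which is therefore constant.
-/

open Real Finset
open scoped ENNReal

/-- `rᵢᵖ = min_p(Δxᵢ, Δxᵢ₊₁) = ((Δxᵢ^{−p} + Δxᵢ₊₁^{−p})/2)^{−1/p}`, with the boundary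
convention `r₁ᵖ = 2^{1/p} Δx₂` and `r_Nᵖ = 2^{1/p} Δx_N`, for `N = n + 2` particles
indexed from `0` to `n+1`. -/
noncomputable def rballp (p : ℝ) (n : ℕ) (x : Fin (n + 2) → ℝ) (i : Fin (n + 2)) : ℝ :=
  if i.val = 0 then (2 : ℝ) ^ (1 / p) * (x 1 - x 0)
  else if i.val = n + 1 then (2 : ℝ) ^ (1 / p) * (x i - x (i - 1))
  else (((x i - x (i - 1)) ^ (-p) + (x (i + 1) - x i) ^ (-p)) / 2) ^ (-1 / p)

/-- The unconfined `p`-approximated discrete modified Keller–Segel energy with equal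
weights `wᵢ = 1/N`, `N = n + 2`:
`Ẽ_N^p(x) = Σᵢ (1/N) log(1/(N rᵢᵖ)) + (χ/N²) Σᵢ Σ_{j≠i} log|xᵢ − xⱼ|`. -/
noncomputable def kspEnergy (p : ℝ) (n : ℕ) (χ : ℝ) (x : Fin (n + 2) → ℝ) : ℝ :=
  ∑ i, (1 / ((n : ℝ) + 2)) * Real.log (1 / (((n : ℝ) + 2) * rballp p n x i)) +
    (χ / ((n : ℝ) + 2) ^ 2) * ∑ i, ∑ j ∈ Finset.univ.erase i, Real.log |x i - x j|

open Topology

theorem HasFDerivAt.apply_self_eq_of_map_smul {E : Type*} [NormedAddCommGroup E]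
    [NormedSpace ℝ E] {f : E → ℝ} {f' : E →L[ℝ] ℝ} {y : E} {c : ℝ}
    (hf : HasFDerivAt f f' y) (hsmul : ∀ᶠ l in 𝓝 1, f (l • y) = f y + c * Real.log l) :
    f' y = c := by
  have hcomp : HasDerivAt (fun l : ℝ => f (l • y)) (f' y) 1 := by
    have hline : HasDerivAt (fun l : ℝ => l • y) y 1 := by
      simpa using (hasDerivAt_id (1 : ℝ)).smul_const y
    exact (one_smul ℝ y ▸ hf).comp_hasDerivAt 1 hline
  have hlog : HasDerivAt (fun l : ℝ => f y + c * Real.log l) c 1 := by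
    simpa using ((hasDerivAt_log one_ne_zero).const_mul c).const_add (f y)
  exact hcomp.unique (hlog.congr_of_eventuallyEq hsmul)

theorem hasDerivAt_second_moment_of_gradient_flow {ι : Type*} [Fintype ι] [DecidableEq ι]
    {f : (ι → ℝ) → ℝ} {x : ℝ → ι → ℝ} {t a : ℝ} (ha : a ≠ 0)
    (hflow : ∀ i, HasDerivAt (fun s => x s i) (-a * fderiv ℝ f (x t) (Pi.single i 1)) t) :
    HasDerivAt (fun s => (1 / a) * ∑ i, x s i ^ 2) (-2 * fderiv ℝ f (x t) (x t)) t := by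
  have hsum := (HasDerivAt.fun_sum (u := Finset.univ) fun i _ => (hflow i).pow 2).const_mul
    (1 / a)
  refine hsum.congr_deriv ?_
  set L := fderiv ℝ f (x t)
  have hL : L (x t) = ∑ i, x t i * L (Pi.single i 1) := by
    conv_lhs => rw [pi_eq_sum_univ' (x t), map_sum]
    simp only [map_smul, smul_eq_mul]
  rw [hL, Finset.mul_sum, Finset.mul_sum]
  refine Finset.sum_congr rfl fun i _ => ?_
  field_simp
  ring

theorem StrictMono.sub_apply_pred_pos {n : ℕ} {y : Fin (n + 2) → ℝ} (hy : StrictMono y)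
    {i : Fin (n + 2)} (h : i.val ≠ 0) : 0 < y i - y (i - 1) := by
  have : i - 1 < i := by
    rw [Fin.lt_def, Fin.coe_sub_one, if_neg (by rintro rfl; simp at h)]
    omega
  linarith [hy this]

theorem StrictMono.apply_succ_sub_pos {n : ℕ} {y : Fin (n + 2) → ℝ} (hy : StrictMono y)
    {i : Fin (n + 2)} (h : i.val ≠ n + 1) : 0 < y (i + 1) - y i := by
  have : i < i + 1 := by
    rw [Fin.lt_def, Fin.val_add_one, if_neg (by simp [Fin.ext_iff, Fin.val_last]; omega)]
    omega
  linarith [hy this]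

theorem rballp_pos (p : ℝ) {n : ℕ} {y : Fin (n + 2) → ℝ} (hy : StrictMono y)
    (i : Fin (n + 2)) : 0 < rballp p n y i := by
  unfold rballp
  split_ifs with h0 h1
  · have : y 0 < y 1 := hy (by simp)
    exact mul_pos (by positivity) (by linarith)
  · exact mul_pos (by positivity) (hy.sub_apply_pred_pos h0)
  · have := hy.sub_apply_pred_pos h0
    have := hy.apply_succ_sub_pos h1
    positivity

theorem rballp_smul {p : ℝ} (hp : p ≠ 0) {n : ℕ} {y : Fin (n + 2) → ℝ} (hy : StrictMono y)
    {l : ℝ} (hl : 0 < l) (i : Fin (n + 2)) :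
    rballp p n (l • y) i = l * rballp p n y i := by
  have hmean : ∀ a b : ℝ, 0 < a → 0 < b →
      (((l * a) ^ (-p) + (l * b) ^ (-p)) / 2) ^ (-1 / p)
        = l * ((a ^ (-p) + b ^ (-p)) / 2) ^ (-1 / p) := by
    intro a b ha hb
    rw [mul_rpow hl.le ha.le, mul_rpow hl.le hb.le, ← mul_add, mul_div_assoc,
      mul_rpow (by positivity) (by positivity), ← rpow_mul hl.le,
      show -p * (-1 / p) = 1 by field_simp, rpow_one]
  unfold rballp
  simp only [Pi.smul_apply, smul_eq_mul, ← mul_sub]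
  split_ifs with h0 h1
  · ring
  · ring
  · exact hmean _ _ (hy.sub_apply_pred_pos h0) (hy.apply_succ_sub_pos h1)

theorem differentiableAt_rballp (p : ℝ) {n : ℕ} {y : Fin (n + 2) → ℝ} (hy : StrictMono y)
    (i : Fin (n + 2)) : DifferentiableAt ℝ (fun x => rballp p n x i) y := by
  unfold rballp
  split_ifs with h0 h1
  · fun_prop
  · fun_prop
  · have := hy.sub_apply_pred_pos h0
    have := hy.apply_succ_sub_pos h1
    fun_prop (disch := positivity)

theorem differentiableAt_kspEnergy (p : ℝ) (n : ℕ) (χ : ℝ) {y : Fin (n + 2) → ℝ}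
    (hy : StrictMono y) : DifferentiableAt ℝ (kspEnergy p n χ) y := by
  have hdr := differentiableAt_rballp p hy
  unfold kspEnergy
  refine (DifferentiableAt.fun_sum fun i _ => ?_).add
    ((DifferentiableAt.fun_sum fun i _ => DifferentiableAt.fun_sum fun j hj => ?_).const_mul _)
  · have := rballp_pos p hy i
    fun_prop (disch := positivity)
  · have : y i - y j ≠ 0 := sub_ne_zero.mpr (hy.injective.ne (ne_of_mem_erase hj).symm)
    simp only [Real.log_abs]
    fun_prop (disch := exact this)

theorem kspEnergy_smul {p : ℝ} (hp : p ≠ 0) {n : ℕ} (χ : ℝ) {y : Fin (n + 2) → ℝ}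
    (hy : StrictMono y) {l : ℝ} (hl : 0 < l) :
    kspEnergy p n χ (l • y)
      = kspEnergy p n χ y + (χ * ((n : ℝ) + 1) / ((n : ℝ) + 2) - 1) * Real.log l := by
  have hself : ∀ i, Real.log (1 / (((n : ℝ) + 2) * rballp p n (l • y) i))
      = Real.log (1 / (((n : ℝ) + 2) * rballp p n y i)) - Real.log l := by
    intro i
    have := rballp_pos p hy i
    rw [rballp_smul hp hy hl, mul_left_comm, one_div, one_div, mul_inv,
      Real.log_mul (by positivity) (by positivity), Real.log_inv]
    ring
  have hpair : ∀ i, ∀ j ∈ Finset.univ.erase i,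
      Real.log |(l • y) i - (l • y) j| = Real.log |y i - y j| + Real.log l := by
    intro i j hj
    have : y i - y j ≠ 0 := sub_ne_zero.mpr (hy.injective.ne (ne_of_mem_erase hj).symm)
    simp only [Pi.smul_apply, smul_eq_mul, ← mul_sub, Real.log_abs,
      Real.log_mul hl.ne' this]
    ring
  unfold kspEnergy
  simp only [hself, Finset.sum_congr rfl (hpair _), mul_sub, Finset.sum_add_distrib,
    Finset.sum_sub_distrib, Finset.sum_const, Finset.card_erase_of_mem (Finset.mem_univ _),
    Finset.card_univ, Fintype.card_fin, nsmul_eq_mul]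
  push_cast
  field_simp
  ring

theorem fderiv_kspEnergy_apply_self {p : ℝ} (hp : p ≠ 0) {n : ℕ} (χ : ℝ)
    {y : Fin (n + 2) → ℝ} (hy : StrictMono y) :
    fderiv ℝ (kspEnergy p n χ) y y = χ * ((n : ℝ) + 1) / ((n : ℝ) + 2) - 1 :=
  (differentiableAt_kspEnergy p n χ hy).hasFDerivAt.apply_self_eq_of_map_smul <|
    eventually_gt_nhds one_pos |>.mono fun _ hl => kspEnergy_smul hp χ hy hl

theorem ksp_second_moment_derivative_general (p : ℝ) (hp : 0 < p) (n : ℕ) (χ : ℝ)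
    (T : ℝ≥0∞) (x : ℝ → Fin (n + 2) → ℝ)
    (hmem : ∀ t : ℝ, 0 ≤ t → ENNReal.ofReal t < T → StrictMono (x t))
    (hflow : ∀ t : ℝ, 0 ≤ t → ENNReal.ofReal t < T → ∀ i : Fin (n + 2),
      HasDerivAt (fun s => x s i)
        (-((n : ℝ) + 2) * fderiv ℝ (kspEnergy p n χ) (x t) (Pi.single i 1)) t) :
    ∀ t : ℝ, 0 ≤ t → ENNReal.ofReal t < T →
      HasDerivAt (fun s => (1 / ((n : ℝ) + 2)) * ∑ i, (x s i) ^ 2)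
        (2 * (1 - 1 / ((n : ℝ) + 2)) * ((1 + 1 / ((n : ℝ) + 1)) - χ)) t := by
  intro t ht htT
  have hM := hasDerivAt_second_moment_of_gradient_flow (by positivity) (hflow t ht htT)
  refine hM.congr_deriv ?_
  rw [fderiv_kspEnergy_apply_self hp.ne' χ (hmem t ht htT)]
  field_simp
  ring

/-- along any solution of the `p`-approximated discrete unconfined
Keller–Segel gradient flow `(1/N) xᵢ' = −∂Ẽ_N^p/∂xᵢ` on `[0,T)`, the second moment
`M₂(t) = (1/N) Σᵢ xᵢ(t)²` has constant derivative
`M₂'(t) = 2(1 − 1/N)(χ₂(N) − χ)` with `χ₂(N) = 1 + 1/(N−1)`. -/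
theorem ksp_second_moment_derivative (p : ℝ) (hp : 0 < p) (n : ℕ) (χ : ℝ) (hχ : 0 < χ)
    (T : ℝ≥0∞) (hT : 0 < T) (x : ℝ → Fin (n + 2) → ℝ)
    (hmem : ∀ t : ℝ, 0 ≤ t → ENNReal.ofReal t < T → StrictMono (x t))
    (hflow : ∀ t : ℝ, 0 ≤ t → ENNReal.ofReal t < T → ∀ i : Fin (n + 2),
      HasDerivAt (fun s => x s i)
        (-((n : ℝ) + 2) * fderiv ℝ (kspEnergy p n χ) (x t) (Pi.single i 1)) t) :
    ∀ t : ℝ, 0 ≤ t → ENNReal.ofReal t < T →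
      HasDerivAt (fun s => (1 / ((n : ℝ) + 2)) * ∑ i, (x s i) ^ 2)
        (2 * (1 - 1 / ((n : ℝ) + 2)) * ((1 + 1 / ((n : ℝ) + 1)) - χ)) t :=
  ksp_second_moment_derivative_general p hp n χ T x hmem hflow
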